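/- Let Σ be a real symmetric positive definite N×N matrix, μ ∈ ℝ^N, and let f be a probability density on ℝ^N with mean vector μ and covariance matrix Σ (i.e., ∫ x f(x) dx = μ and ∫ (x−μ)(x−μ)ᵀ f(x) dx = Σ), such that f·log f is integrable. Then the differential entropy satisfies −∫_{ℝ^N} f log f ≤ (1/2) log((2π e)^N |Σ|), with equality for the multivariate normal density with mean μ and covariance Σ. That is, the multivariate normal distribution is the maximum entropy distribution for a given mean vector and covariance matrix. -/

import Mathlib

/-!
Gibbs' inequality gives `∫ f log g ≤ ∫ f log f` for the density `g` of `N(μ, Σ)`. Since `log g` is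
a constant minus half the Mahalanobis form `(x - μ)ᵀ Σ⁻¹ (x - μ)`, whose `f`-expectation is
`tr (Σ⁻¹ Σ) = N`, the cross-entropy `-∫ f log g` depends on `f` only through its covariance, so it
equals the entropy of `g` itself, `½ log ((2πe)ᴺ |Σ|)`. The moments of `g` are computed by
substituting `x = μ + Q y` with `Q Qᵀ = Σ`, which turns `g` into a product of one-dimensional
standard Gaussians.
-/

open Matrix MeasureTheory Real

/-- Density of the multivariate normal distribution `N(μ, Σ)` on `ℝ^n`
(for `Σ` positive definite). -/
noncomputable def gaussDensity {n : ℕ} (μ : Fin n → ℝ) (S : Matrix (Fin n) (Fin n) ℝ)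
    (x : Fin n → ℝ) : ℝ :=
  (2 * π) ^ (-(n : ℝ) / 2) * S.det ^ (-(1 : ℝ) / 2) *
    Real.exp (-(1 / 2) * ((x - μ) ⬝ᵥ S⁻¹.mulVec (x - μ)))

/-- The multivariate normal distribution `N(μ, Σ)` on `ℝ^n`, as the measure with
density `gaussDensity μ S` with respect to Lebesgue measure. -/
noncomputable def gaussMeasure {n : ℕ} (μ : Fin n → ℝ) (S : Matrix (Fin n) (Fin n) ℝ) :
    Measure (Fin n → ℝ) :=
  volume.withDensity fun x => ENNReal.ofReal (gaussDensity μ S x)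

lemma integral_exp_neg_half_mul_sq : ∫ x : ℝ, exp (-(1 / 2) * x ^ 2) = √(2 * π) := by
  rw [integral_gaussian]
  congr 1
  ring

lemma integrable_sq_mul_exp_neg_half_mul_sq :
    Integrable fun x : ℝ => x ^ 2 * exp (-(1 / 2) * x ^ 2) := by
  simpa using integrable_rpow_mul_exp_neg_mul_sq (b := 1 / 2) (by norm_num) (s := 2) (by norm_num)

open ProbabilityTheory in
lemma integral_sq_mul_exp_neg_half_mul_sq :
    ∫ x : ℝ, x ^ 2 * exp (-(1 / 2) * x ^ 2) = √(2 * π) := by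
  have hvar : ∫ x, x ^ 2 ∂gaussianReal 0 1 = 1 := by
    simpa [variance_eq_integral measurable_id'.aemeasurable] using
      variance_fun_id_gaussianReal (μ := 0) (v := 1)
  have hpdf (x : ℝ) : gaussianPDFReal 0 1 x • x ^ 2 =
      (√(2 * π))⁻¹ * (x ^ 2 * exp (-(1 / 2) * x ^ 2)) := by
    simp only [gaussianPDFReal, NNReal.coe_one, mul_one, sub_zero, smul_eq_mul]
    ring_nf
  rw [integral_gaussianReal_eq_integral_smul one_ne_zero] at hvar
  simp_rw [hpdf, integral_const_mul] at hvar
  exact ((inv_mul_eq_one₀ (by positivity)).mp hvar).symm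

section StandardGaussianMoments
variable {ι : Type*} [Fintype ι]

lemma integrable_prod_exp_neg_half_mul_sq :
    Integrable fun y : ι → ℝ => ∏ i, exp (-(1 / 2) * y i ^ 2) :=
  Integrable.fintype_prod fun _ => integrable_exp_neg_mul_sq (by norm_num)

lemma integral_prod_exp_neg_half_mul_sq :
    ∫ y : ι → ℝ, ∏ i, exp (-(1 / 2) * y i ^ 2) = √(2 * π) ^ Fintype.card ι := by
  rw [integral_fintype_prod_volume_eq_pow (fun t : ℝ => exp (-(1 / 2) * t ^ 2)),
    integral_exp_neg_half_mul_sq]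

variable [DecidableEq ι]

lemma sq_mul_prod_exp_neg_half_mul_sq (y : ι → ℝ) (i : ι) :
    y i ^ 2 * ∏ j, exp (-(1 / 2) * y j ^ 2) =
      ∏ j, y j ^ (if j = i then 2 else 0) * exp (-(1 / 2) * y j ^ 2) := by
  rw [Finset.prod_mul_distrib]
  congr 1
  simp

lemma integrable_sq_mul_prod_exp_neg_half_mul_sq (i : ι) :
    Integrable fun y : ι → ℝ => y i ^ 2 * ∏ j, exp (-(1 / 2) * y j ^ 2) := by
  simp_rw [sq_mul_prod_exp_neg_half_mul_sq _ i]
  refine Integrable.fintype_prod_dep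
    (f := fun j t => t ^ (if j = i then 2 else 0) * exp (-(1 / 2) * t ^ 2)) fun j => ?_
  split_ifs
  · exact integrable_sq_mul_exp_neg_half_mul_sq
  · simpa using integrable_exp_neg_mul_sq (b := 1 / 2) (by norm_num)

lemma integral_sq_mul_prod_exp_neg_half_mul_sq (i : ι) :
    ∫ y : ι → ℝ, y i ^ 2 * ∏ j, exp (-(1 / 2) * y j ^ 2) = √(2 * π) ^ Fintype.card ι := by
  simp_rw [sq_mul_prod_exp_neg_half_mul_sq _ i]
  rw [integral_fintype_prod_volume_eq_prod
      (fun j t => t ^ (if j = i then 2 else 0) * exp (-(1 / 2) * t ^ 2)),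
    ← Finset.card_univ, ← Finset.prod_const]
  refine Finset.prod_congr rfl fun j _ => ?_
  split_ifs
  · exact integral_sq_mul_exp_neg_half_mul_sq
  · simpa using integral_exp_neg_half_mul_sq

end StandardGaussianMoments

lemma sub_le_mul_log_sub_mul_log {a b : ℝ} (ha : 0 ≤ a) (hb : 0 < b) :
    a - b ≤ a * log a - a * log b := by
  rcases ha.eq_or_lt with rfl | ha
  · simpa using hb.le
  · have h := one_sub_inv_le_log_of_pos (div_pos ha hb)
    rw [log_div ha.ne' hb.ne', inv_div] at h
    have h := mul_le_mul_of_nonneg_left h ha.le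
    rwa [mul_sub, mul_one, mul_div_cancel₀ _ ha.ne', mul_sub] at h

lemma integral_mul_log_le_integral_mul_log {α : Type*} [MeasurableSpace α] {ν : Measure α}
    {f g : α → ℝ} (hf : ∀ x, 0 ≤ f x) (hg : ∀ x, 0 < g x) (hfi : Integrable f ν)
    (hgi : Integrable g ν) (hfg : ∫ x, g x ∂ν ≤ ∫ x, f x ∂ν)
    (hflogf : Integrable (fun x => f x * log (f x)) ν)
    (hflogg : Integrable (fun x => f x * log (g x)) ν) :
    ∫ x, f x * log (g x) ∂ν ≤ ∫ x, f x * log (f x) ∂ν := by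
  have key : ∫ x, f x - g x ∂ν ≤ ∫ x, f x * log (f x) - f x * log (g x) ∂ν :=
    integral_mono (hfi.sub hgi) (hflogf.sub hflogg) fun x =>
      sub_le_mul_log_sub_mul_log (hf x) (hg x)
  rw [integral_sub hfi hgi, integral_sub hflogf hflogg] at key
  linarith

section AffineChangeOfVariables
variable {ι : Type*} [Fintype ι] [DecidableEq ι] {E : Type*} [NormedAddCommGroup E]
  [NormedSpace ℝ E] {Q : Matrix ι ι ℝ}

lemma hasFDerivAt_add_mulVec (μ y : ι → ℝ) :
    HasFDerivAt (fun y => μ + Q *ᵥ y) (LinearMap.toContinuousLinearMap (toLin' Q)) y :=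
  (LinearMap.toContinuousLinearMap (toLin' Q)).hasFDerivAt.const_add μ

lemma image_univ_add_mulVec (hQ : IsUnit Q) (μ : ι → ℝ) :
    (fun y => μ + Q *ᵥ y) '' Set.univ = Set.univ := by
  rw [Set.image_univ]
  exact ((add_left_surjective μ).comp (mulVec_surjective_iff_isUnit.mpr hQ)).range_eq

lemma integral_eq_abs_det_smul_integral_comp_add_mulVec (hQ : IsUnit Q) (μ : ι → ℝ)
    (φ : (ι → ℝ) → E) : ∫ x, φ x = |Q.det| • ∫ y, φ (μ + Q *ᵥ y) := by
  have h := integral_image_eq_integral_abs_det_fderiv_smul volume MeasurableSet.univ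
    (fun y _ => (hasFDerivAt_add_mulVec (Q := Q) μ y).hasFDerivWithinAt)
    ((add_right_injective μ).comp (mulVec_injective_of_isUnit hQ)).injOn φ
  simpa [image_univ_add_mulVec hQ, integral_smul] using h

lemma integrable_comp_add_mulVec_iff (hQ : IsUnit Q) (μ : ι → ℝ) {φ : (ι → ℝ) → E} :
    Integrable (fun y => φ (μ + Q *ᵥ y)) ↔ Integrable φ := by
  have h := integrableOn_image_iff_integrableOn_abs_det_fderiv_smul volume MeasurableSet.univ
    (fun y _ => (hasFDerivAt_add_mulVec (Q := Q) μ y).hasFDerivWithinAt)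
    ((add_right_injective μ).comp (mulVec_injective_of_isUnit hQ)).injOn φ
  have hdet : |Q.det| ≠ 0 := abs_ne_zero.mpr ((isUnit_iff_isUnit_det Q).mp hQ).ne_zero
  simp only [image_univ_add_mulVec hQ, integrableOn_univ, LinearMap.det_toContinuousLinearMap,
    LinearMap.det_toLin'] at h
  rw [h]
  exact (integrable_smul_iff hdet fun y => φ (μ + Q *ᵥ y)).symm

end AffineChangeOfVariables

open scoped MatrixOrder in
lemma Matrix.PosDef.exists_isUnit_eq_mul_transpose {ι : Type*} [Fintype ι] [DecidableEq ι]
    {S : Matrix ι ι ℝ} (hS : S.PosDef) : ∃ Q : Matrix ι ι ℝ, IsUnit Q ∧ S = Q * Qᵀ := by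
  have hsqrt : CFC.sqrt S * CFC.sqrt S = S := CFC.sqrt_mul_sqrt_self S hS.posSemidef.nonneg
  have hsymm : (CFC.sqrt S)ᵀ = CFC.sqrt S :=
    (isHermitian_iff_isSymm.mp (CFC.sqrt_nonneg S).posSemidef.1).eq
  refine ⟨CFC.sqrt S, ?_, by rw [hsymm, hsqrt]⟩
  rw [isUnit_iff_isUnit_det, isUnit_iff_ne_zero]
  intro h0
  have h := congrArg det hsqrt
  rw [det_mul, h0, zero_mul] at h
  exact hS.det_pos.ne h

section Mahalanobis
variable {ι : Type*} [Fintype ι] [DecidableEq ι]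

noncomputable def mahalanobisSq (μ : ι → ℝ) (S : Matrix ι ι ℝ) (x : ι → ℝ) : ℝ :=
  (x - μ) ⬝ᵥ S⁻¹ *ᵥ (x - μ)

lemma mahalanobisSq_mul_transpose_add_mulVec {Q : Matrix ι ι ℝ} (hQ : IsUnit Q) (μ y : ι → ℝ) :
    mahalanobisSq μ (Q * Qᵀ) (μ + Q *ᵥ y) = ∑ i, y i ^ 2 := by
  have hQ' : IsUnit Q.det := (isUnit_iff_isUnit_det Q).mp hQ
  rw [mahalanobisSq, add_sub_cancel_left, Matrix.mul_inv_rev, mulVec_mulVec, Matrix.mul_assoc,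
    nonsing_inv_mul _ hQ', Matrix.mul_one, ← vecMul_transpose, dotProduct_mulVec, vecMul_vecMul,
    mul_nonsing_inv _ (by simpa using hQ'), vecMul_one]
  simp [dotProduct, sq]

lemma mul_mahalanobisSq_eq_sum (μ : ι → ℝ) (S : Matrix ι ι ℝ) (h : (ι → ℝ) → ℝ) (x : ι → ℝ) :
    h x * mahalanobisSq μ S x = ∑ i, ∑ j, S⁻¹ i j * ((x i - μ i) * (x j - μ j) * h x) := by
  simp only [mahalanobisSq, dotProduct, mulVec, Pi.sub_apply, Finset.mul_sum]
  exact Finset.sum_congr rfl fun i _ => Finset.sum_congr rfl fun j _ => by ring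

variable {μ : ι → ℝ} {S : Matrix ι ι ℝ} {h : (ι → ℝ) → ℝ}

lemma integrable_mul_mahalanobisSq
    (hcovInt : ∀ i j, Integrable fun x => (x i - μ i) * (x j - μ j) * h x) :
    Integrable fun x => h x * mahalanobisSq μ S x := by
  rw [funext (mul_mahalanobisSq_eq_sum μ S h)]
  exact integrable_finsetSum _ fun i _ =>
    integrable_finsetSum _ fun j _ => (hcovInt i j).const_mul _

lemma integral_mul_mahalanobisSq (hS : S.IsSymm) (hSu : IsUnit S)
    (hcovInt : ∀ i j, Integrable fun x => (x i - μ i) * (x j - μ j) * h x)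
    (hcov : ∀ i j, ∫ x, (x i - μ i) * (x j - μ j) * h x = S i j) :
    ∫ x, h x * mahalanobisSq μ S x = Fintype.card ι := by
  rw [funext (mul_mahalanobisSq_eq_sum μ S h), integral_finsetSum]
  · calc ∑ i, ∫ x, ∑ j, S⁻¹ i j * ((x i - μ i) * (x j - μ j) * h x)
        = ∑ i, ∑ j, S⁻¹ i j * S j i := by
          refine Finset.sum_congr rfl fun i _ => ?_
          rw [integral_finsetSum _ fun j _ => (hcovInt i j).const_mul _]
          simp_rw [integral_const_mul, hcov, hS.apply]
      _ = trace (S⁻¹ * S) := by simp [trace, mul_apply]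
      _ = Fintype.card ι := by
          rw [nonsing_inv_mul _ ((isUnit_iff_isUnit_det S).mp hSu)]
          simp
  · exact fun i _ => integrable_finsetSum _ fun j _ => (hcovInt i j).const_mul _

end Mahalanobis

section GaussDensity
variable {n : ℕ} (μ : Fin n → ℝ) {S : Matrix (Fin n) (Fin n) ℝ}

lemma gaussDensity_eq (x : Fin n → ℝ) : gaussDensity μ S x =
    (2 * π) ^ (-(n : ℝ) / 2) * S.det ^ (-(1 : ℝ) / 2) * exp (-(1 / 2) * mahalanobisSq μ S x) :=
  rfl

lemma gaussDensity_pos (hS : 0 < S.det) (x : Fin n → ℝ) : 0 < gaussDensity μ S x := by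
  rw [gaussDensity_eq]
  positivity

lemma log_gaussDensity (hS : 0 < S.det) (x : Fin n → ℝ) :
    log (gaussDensity μ S x) = -(1 / 2) * (log ((2 * π) ^ n * S.det) + mahalanobisSq μ S x) := by
  have h2π : 0 < 2 * π := by positivity
  rw [gaussDensity_eq, log_mul (by positivity) (exp_ne_zero _), log_mul (by positivity)
    (by positivity), log_rpow h2π, log_rpow hS, log_exp, log_mul (by positivity) hS.ne', log_pow]
  ring

variable {h : (Fin n → ℝ) → ℝ}

lemma integrable_mul_log_gaussDensity (hS : 0 < S.det) (hh : Integrable h)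
    (hhq : Integrable fun x => h x * mahalanobisSq μ S x) :
    Integrable fun x => h x * log (gaussDensity μ S x) := by
  refine (((hh.const_mul (log ((2 * π) ^ n * S.det))).add hhq).const_mul (-(1 / 2))).congr
    (ae_of_all _ fun x => ?_)
  simp only [log_gaussDensity μ hS, Pi.add_apply]
  ring

lemma integral_mul_log_gaussDensity (hS : 0 < S.det) (hh : Integrable h)
    (hhq : Integrable fun x => h x * mahalanobisSq μ S x) :
    ∫ x, h x * log (gaussDensity μ S x) =
      -(1 / 2) * (log ((2 * π) ^ n * S.det) * (∫ x, h x) + ∫ x, h x * mahalanobisSq μ S x) := by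
  calc ∫ x, h x * log (gaussDensity μ S x)
      = ∫ x, -(1 / 2) * (log ((2 * π) ^ n * S.det) * h x + h x * mahalanobisSq μ S x) := by
        congr 1 with x
        rw [log_gaussDensity μ hS]
        ring
    _ = _ := by rw [integral_const_mul, integral_add (hh.const_mul _) hhq, integral_const_mul]

lemma gaussDensity_mul_transpose_add_mulVec {Q : Matrix (Fin n) (Fin n) ℝ} (hQ : IsUnit Q)
    (y : Fin n → ℝ) : gaussDensity μ (Q * Qᵀ) (μ + Q *ᵥ y) =
      (|Q.det| * √(2 * π) ^ n)⁻¹ * ∏ i, exp (-(1 / 2) * y i ^ 2) := by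
  have hdet : (Q * Qᵀ).det ^ (-(1 : ℝ) / 2) = |Q.det|⁻¹ := by
    rw [det_mul, det_transpose, ← sq, ← sqrt_sq_eq_abs, sqrt_eq_rpow, neg_div,
      rpow_neg (sq_nonneg _)]
  have h2π : (2 * π) ^ (-(n : ℝ) / 2) = (√(2 * π) ^ n)⁻¹ := by
    rw [neg_div, rpow_neg (by positivity), rpow_div_two_eq_sqrt _ (by positivity), rpow_natCast]
  rw [gaussDensity_eq, mahalanobisSq_mul_transpose_add_mulVec hQ, hdet, h2π, Finset.mul_sum,
    exp_sum, mul_inv]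
  ring

lemma gaussDensity_mul_mahalanobisSq_mul_transpose_add_mulVec {Q : Matrix (Fin n) (Fin n) ℝ}
    (hQ : IsUnit Q) (y : Fin n → ℝ) :
    gaussDensity μ (Q * Qᵀ) (μ + Q *ᵥ y) * mahalanobisSq μ (Q * Qᵀ) (μ + Q *ᵥ y) =
      (|Q.det| * √(2 * π) ^ n)⁻¹ * ∑ i, y i ^ 2 * ∏ j, exp (-(1 / 2) * y j ^ 2) := by
  rw [gaussDensity_mul_transpose_add_mulVec μ hQ, mahalanobisSq_mul_transpose_add_mulVec hQ,
    ← Finset.sum_mul]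
  ring

lemma integrable_gaussDensity (hS : S.PosDef) : Integrable (gaussDensity μ S) := by
  obtain ⟨Q, hQ, rfl⟩ := hS.exists_isUnit_eq_mul_transpose
  rw [← integrable_comp_add_mulVec_iff hQ μ]
  simp_rw [gaussDensity_mul_transpose_add_mulVec μ hQ]
  exact integrable_prod_exp_neg_half_mul_sq.const_mul _

lemma integral_gaussDensity (hS : S.PosDef) : ∫ x, gaussDensity μ S x = 1 := by
  obtain ⟨Q, hQ, rfl⟩ := hS.exists_isUnit_eq_mul_transpose
  have hdet : |Q.det| ≠ 0 := abs_ne_zero.mpr ((isUnit_iff_isUnit_det Q).mp hQ).ne_zero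
  rw [integral_eq_abs_det_smul_integral_comp_add_mulVec hQ μ]
  simp_rw [gaussDensity_mul_transpose_add_mulVec μ hQ]
  rw [integral_const_mul, integral_prod_exp_neg_half_mul_sq, Fintype.card_fin, smul_eq_mul]
  field_simp

lemma integrable_gaussDensity_mul_mahalanobisSq (hS : S.PosDef) :
    Integrable fun x => gaussDensity μ S x * mahalanobisSq μ S x := by
  obtain ⟨Q, hQ, rfl⟩ := hS.exists_isUnit_eq_mul_transpose
  rw [← integrable_comp_add_mulVec_iff hQ μ]
  simp_rw [gaussDensity_mul_mahalanobisSq_mul_transpose_add_mulVec μ hQ]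
  exact (integrable_finsetSum _ fun i _ =>
    integrable_sq_mul_prod_exp_neg_half_mul_sq i).const_mul _

lemma integral_gaussDensity_mul_mahalanobisSq (hS : S.PosDef) :
    ∫ x, gaussDensity μ S x * mahalanobisSq μ S x = n := by
  obtain ⟨Q, hQ, rfl⟩ := hS.exists_isUnit_eq_mul_transpose
  have hdet : |Q.det| ≠ 0 := abs_ne_zero.mpr ((isUnit_iff_isUnit_det Q).mp hQ).ne_zero
  rw [integral_eq_abs_det_smul_integral_comp_add_mulVec hQ μ]
  simp_rw [gaussDensity_mul_mahalanobisSq_mul_transpose_add_mulVec μ hQ]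
  rw [integral_const_mul,
    integral_finsetSum _ fun i _ => integrable_sq_mul_prod_exp_neg_half_mul_sq i]
  simp_rw [integral_sq_mul_prod_exp_neg_half_mul_sq]
  simp only [Finset.sum_const, Finset.card_univ, Fintype.card_fin, nsmul_eq_mul, smul_eq_mul]
  field_simp

end GaussDensity

theorem multivariate_gaussian_maximizes_entropy_general {N : ℕ} (μ : Fin N → ℝ)
    (S : Matrix (Fin N) (Fin N) ℝ) (hS : S.PosDef)
    (f : (Fin N → ℝ) → ℝ) (hnonneg : ∀ x, 0 ≤ f x)
    (hint : Integrable f) (hprob : ∫ x, f x = 1)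
    (hcovInt : ∀ i j, Integrable fun x => (x i - μ i) * (x j - μ j) * f x)
    (hcov : ∀ i j, ∫ x, (x i - μ i) * (x j - μ j) * f x = S i j)
    (hent : Integrable fun x => f x * Real.log (f x)) :
    (-∫ x, f x * Real.log (f x)) ≤
        (1 / 2) * Real.log ((2 * π * Real.exp 1) ^ N * S.det) ∧
      (-∫ x, gaussDensity μ S x * Real.log (gaussDensity μ S x)) =
        (1 / 2) * Real.log ((2 * π * Real.exp 1) ^ N * S.det) := by
  have hdet := hS.det_pos
  have hfq := integrable_mul_mahalanobisSq (S := S) hcovInt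
  have hlog : log ((2 * π * exp 1) ^ N * S.det) = log ((2 * π) ^ N * S.det) + N := by
    rw [mul_pow, mul_right_comm, log_mul (by positivity) (by positivity), ← exp_nat_mul, log_exp,
      mul_one]
  have hcross := integral_mul_log_gaussDensity μ hdet hint hfq
  rw [hprob, integral_mul_mahalanobisSq (isHermitian_iff_isSymm.mp hS.1) hS.isUnit hcovInt hcov,
    Fintype.card_fin] at hcross
  have hgibbs := integral_mul_log_le_integral_mul_log hnonneg (gaussDensity_pos μ hdet) hint
    (integrable_gaussDensity μ hS) (by rw [integral_gaussDensity μ hS, hprob]) hent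
    (integrable_mul_log_gaussDensity μ hdet hint hfq)
  refine ⟨by linarith, ?_⟩
  rw [integral_mul_log_gaussDensity μ hdet (integrable_gaussDensity μ hS)
    (integrable_gaussDensity_mul_mahalanobisSq μ hS), integral_gaussDensity μ hS,
    integral_gaussDensity_mul_mahalanobisSq μ hS, hlog]
  ring

theorem multivariate_gaussian_maximizes_entropy {N : ℕ} (μ : Fin N → ℝ)
    (S : Matrix (Fin N) (Fin N) ℝ) (hS : S.PosDef)
    (f : (Fin N → ℝ) → ℝ) (hmeas : Measurable f) (hnonneg : ∀ x, 0 ≤ f x)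
    (hint : Integrable f) (hprob : ∫ x, f x = 1)
    (hmeanInt : ∀ i, Integrable fun x => x i * f x)
    (hmean : ∀ i, ∫ x, x i * f x = μ i)
    (hcovInt : ∀ i j, Integrable fun x => (x i - μ i) * (x j - μ j) * f x)
    (hcov : ∀ i j, ∫ x, (x i - μ i) * (x j - μ j) * f x = S i j)
    (hent : Integrable fun x => f x * Real.log (f x)) :
    (-∫ x, f x * Real.log (f x)) ≤
        (1 / 2) * Real.log ((2 * π * Real.exp 1) ^ N * S.det) ∧
      (-∫ x, gaussDensity μ S x * Real.log (gaussDensity μ S x)) =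
        (1 / 2) * Real.log ((2 * π * Real.exp 1) ^ N * S.det) :=
  multivariate_gaussian_maximizes_entropy_general μ S hS f hnonneg hint hprob hcovInt hcov hent
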